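/- For μ > 0, 0 ≤ α < 1 and real k, the function y ↦ (μ/sinh(μy))^{α+1} e^{μky} on (0,∞) is completely monotone, i.e. it is the Laplace transform of a positive σ-finite measure on [0,∞). -/

import Mathlib

open Real Set Filter Topology

/-!
With `x = e^{-2μy}` one has `μ / sinh (μy) = 2μ e^{-μy} / (1 - x)`, so the binomial series of
`(1 - x)^{-(α+1)}`, whose coefficients `multichoose (α+1) m` are positive, writes the function as
`∑ aₘ e^{-λₘ y}` with `aₘ > 0` and `λₘ = μ(α+1-k) + 2μm > 0`. Such a series can be differentiated
termwise on `(0, ∞)`, since `λ^q e^{-λy}` is dominated by a multiple of `e^{-λy/2}`, and then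
`(-1)^n h^{(n)}(y) = ∑ aₘ λₘ^n e^{-λₘ y} ≥ 0`.
-/

theorem Ring.multichoose_pos {R : Type*} [Ring R] [LinearOrder R] [IsStrictOrderedRing R]
    [BinomialRing R] {r : R} (hr : 0 < r) (n : ℕ) : 0 < Ring.multichoose r n := by
  have h := Ring.factorial_nsmul_multichoose_eq_ascPochhammer r n
  rw [Polynomial.ascPochhammer_smeval_eq_eval, nsmul_eq_mul] at h
  exact pos_of_mul_pos_right (h ▸ ascPochhammer_pos n r hr) (by positivity)

theorem Real.hasSum_multichoose_mul_pow (β : ℝ) {x : ℝ} (hx : |x| < 1) :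
    HasSum (fun n ↦ Ring.multichoose β n * x ^ n) ((1 - x) ^ (-β)) := by
  have h := (Real.one_div_one_sub_rpow_hasFPowerSeriesOnBall_zero β).hasSum
    (y := x) (by simpa [Metric.mem_eball, edist_dist, Real.dist_eq] using hx)
  simp only [FormalMultilinearSeries.ofScalars_apply_eq, smul_eq_mul, zero_add,
    ← Ring.multichoose_eq] at h
  rwa [Real.rpow_neg (by linarith [abs_lt.1 hx]), ← one_div]

theorem Real.div_sinh_rpow_mul_exp {μ y : ℝ} (hμ : 0 < μ) (hy : 0 < y) (β k : ℝ) :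
    (μ / sinh (μ * y)) ^ β * exp (μ * k * y) =
      (2 * μ) ^ β * exp (-(μ * (β - k) * y)) * (1 - exp (-(2 * μ * y))) ^ (-β) := by
  have hq : 0 < 1 - exp (-(2 * μ * y)) := by
    rw [sub_pos, exp_lt_one_iff]; nlinarith
  have hsinh : μ / sinh (μ * y) = 2 * μ * exp (-(μ * y)) / (1 - exp (-(2 * μ * y))) := by
    have h1 : exp (-(μ * y)) * exp (μ * y) = 1 := by rw [← exp_add]; simp
    have h2 : exp (-(μ * y)) * exp (-(μ * y)) = exp (-(2 * μ * y)) := by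
      rw [← exp_add]; ring_nf
    rw [div_eq_div_iff (sinh_pos_iff.2 (by positivity)).ne' hq.ne', sinh_eq]
    linear_combination (-μ) * h1 + μ * h2
  have hexp : exp (-(μ * y) * β) * exp (μ * k * y) = exp (-(μ * (β - k) * y)) := by
    rw [← exp_add]; ring_nf
  rw [hsinh, div_rpow (by positivity) hq.le, mul_rpow (by positivity) (exp_nonneg _),
    ← exp_mul, rpow_neg hq.le, ← hexp]
  ring

theorem Real.hasSum_div_sinh_rpow_mul_exp {μ y : ℝ} (hμ : 0 < μ) (hy : 0 < y) (β k : ℝ) :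
    HasSum (fun m : ℕ ↦ (2 * μ) ^ β * Ring.multichoose β m *
        exp (-((μ * (β - k) + 2 * μ * m) * y)))
      ((μ / sinh (μ * y)) ^ β * exp (μ * k * y)) := by
  have hx : |exp (-(2 * μ * y))| < 1 := by
    rw [abs_of_pos (exp_pos _), exp_lt_one_iff]; nlinarith
  rw [div_sinh_rpow_mul_exp hμ hy]
  refine ((hasSum_multichoose_mul_pow β hx).mul_left
    ((2 * μ) ^ β * exp (-(μ * (β - k) * y)))).congr_fun fun m ↦ ?_
  have hexp : exp (-((μ * (β - k) + 2 * μ * m) * y)) =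
      exp (-(μ * (β - k) * y)) * exp (m * -(2 * μ * y)) := by
    rw [← exp_add]; ring_nf
  rw [← exp_nat_mul, hexp]
  ring

theorem Real.pow_mul_exp_neg_mul_le {l y : ℝ} (hl : 0 ≤ l) (hy : 0 < y) (q : ℕ) :
    l ^ q * exp (-(l * y)) ≤ q.factorial * (2 / y) ^ q * exp (-(l * (y / 2))) := by
  have hpow : (l * (y / 2)) ^ q ≤ q.factorial * exp (l * (y / 2)) := by
    rw [← div_le_iff₀' (by positivity)]
    exact pow_div_factorial_le_exp _ (by positivity) q
  have hl' : l ^ q = (2 / y) ^ q * (l * (y / 2)) ^ q := by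
    rw [← mul_pow]; field_simp
  calc l ^ q * exp (-(l * y))
      ≤ (2 / y) ^ q * (q.factorial * exp (l * (y / 2))) * exp (-(l * y)) := by
        rw [hl']; gcongr
    _ = q.factorial * (2 / y) ^ q * exp (-(l * (y / 2))) := by
        rw [mul_assoc, mul_assoc, ← exp_add]; ring_nf

section ExpSeries

variable {ι : Type*} {a l : ι → ℝ}

theorem summable_mul_pow_mul_exp_neg (ha : ∀ i, 0 ≤ a i) (hl : ∀ i, 0 ≤ l i)
    (hs : ∀ y, 0 < y → Summable fun i ↦ a i * exp (-(l i * y))) (q : ℕ) {y : ℝ} (hy : 0 < y) :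
    Summable fun i ↦ a i * l i ^ q * exp (-(l i * y)) := by
  refine ((hs (y / 2) (half_pos hy)).mul_left (q.factorial * (2 / y) ^ q)).of_nonneg_of_le
    (fun i ↦ by have := ha i; have := hl i; positivity) fun i ↦ ?_
  calc a i * l i ^ q * exp (-(l i * y)) = a i * (l i ^ q * exp (-(l i * y))) := mul_assoc ..
    _ ≤ a i * (q.factorial * (2 / y) ^ q * exp (-(l i * (y / 2)))) :=
        mul_le_mul_of_nonneg_left (pow_mul_exp_neg_mul_le (hl i) hy q) (ha i)
    _ = _ := by ring

theorem hasDerivAt_tsum_mul_pow_mul_exp_neg (ha : ∀ i, 0 ≤ a i) (hl : ∀ i, 0 ≤ l i)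
    (hs : ∀ y, 0 < y → Summable fun i ↦ a i * exp (-(l i * y))) (q : ℕ) {y : ℝ} (hy : 0 < y) :
    HasDerivAt (fun z ↦ ∑' i, a i * (-l i) ^ q * exp (-(l i * z)))
      (∑' i, a i * (-l i) ^ (q + 1) * exp (-(l i * y))) y := by
  have hy2 : y ∈ Ioi (y / 2) := half_lt_self hy
  refine hasDerivAt_tsum_of_isPreconnected (g := fun i z ↦ a i * (-l i) ^ q * exp (-(l i * z)))
    (g' := fun i z ↦ a i * (-l i) ^ (q + 1) * exp (-(l i * z)))
    (summable_mul_pow_mul_exp_neg ha hl hs (q + 1) (half_pos hy)) isOpen_Ioi isPreconnected_Ioi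
    (fun i z _ ↦ ?_) (fun i z hz ↦ ?_) hy2 ?_ hy2
  · refine ((((hasDerivAt_id z).const_mul (l i)).neg.exp).const_mul
      (a i * (-l i) ^ q)).congr_deriv ?_
    simp only [id, mul_one, Pi.neg_apply]
    ring
  · rw [norm_mul, norm_mul, norm_pow, norm_neg, norm_of_nonneg (ha i), norm_of_nonneg (hl i),
      norm_of_nonneg (exp_nonneg _)]
    have := ha i; have := hl i
    gcongr
    exact hz.le
  · refine (summable_mul_pow_mul_exp_neg ha hl hs q hy).of_norm_bounded fun i ↦ ?_
    rw [norm_mul, norm_mul, norm_pow, norm_neg, norm_of_nonneg (ha i), norm_of_nonneg (hl i),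
      norm_of_nonneg (exp_nonneg _)]

theorem iteratedDeriv_eq_tsum_mul_pow_mul_exp_neg {g : ℝ → ℝ} (ha : ∀ i, 0 ≤ a i)
    (hl : ∀ i, 0 ≤ l i) (hg : ∀ y, 0 < y → HasSum (fun i ↦ a i * exp (-(l i * y))) (g y))
    (n : ℕ) {y : ℝ} (hy : 0 < y) :
    iteratedDeriv n g y = ∑' i, a i * (-l i) ^ n * exp (-(l i * y)) := by
  induction n generalizing y with
  | zero => simpa using (hg y hy).tsum_eq.symm
  | succ n ih =>
    have hev : iteratedDeriv n g =ᶠ[𝓝 y] fun z ↦ ∑' i, a i * (-l i) ^ n * exp (-(l i * z)) :=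
      eventually_of_mem (Ioi_mem_nhds hy) fun z hz ↦ ih hz
    rw [iteratedDeriv_succ, hev.deriv_eq]
    exact (hasDerivAt_tsum_mul_pow_mul_exp_neg ha hl (fun z hz ↦ (hg z hz).summable) n hy).deriv

theorem neg_one_pow_mul_iteratedDeriv_nonneg_of_hasSum_exp {g : ℝ → ℝ} (ha : ∀ i, 0 ≤ a i)
    (hl : ∀ i, 0 ≤ l i) (hg : ∀ y, 0 < y → HasSum (fun i ↦ a i * exp (-(l i * y))) (g y))
    (n : ℕ) {y : ℝ} (hy : 0 < y) :
    0 ≤ (-1) ^ n * iteratedDeriv n g y := by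
  rw [iteratedDeriv_eq_tsum_mul_pow_mul_exp_neg ha hl hg n hy, ← tsum_mul_left]
  refine tsum_nonneg fun i ↦ ?_
  have hsign : (-1 : ℝ) ^ n * (-l i) ^ n = l i ^ n := by rw [← mul_pow, neg_one_mul, neg_neg]
  have hterm : (-1) ^ n * (a i * (-l i) ^ n * exp (-(l i * y))) =
      a i * l i ^ n * exp (-(l i * y)) := by
    linear_combination a i * exp (-(l i * y)) * hsign
  have := ha i; have := hl i
  rw [hterm]; positivity

end ExpSeries

theorem sinh_density_completely_monotone_general (α k μ : ℝ) (hα0 : 0 ≤ α)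
    (hk : k < 1 + α) (hμ : 0 < μ) :
    ∀ n : ℕ, ∀ y : ℝ, 0 < y →
      0 ≤ (-1 : ℝ) ^ n *
        iteratedDeriv n (fun y => (μ / Real.sinh (μ * y)) ^ (α + 1) * Real.exp (μ * k * y)) y := by
  intro n y hy
  have hβ : 0 < α + 1 := by linarith
  refine neg_one_pow_mul_iteratedDeriv_nonneg_of_hasSum_exp (fun m ↦ ?_) (fun m ↦ ?_)
    (fun z hz ↦ hasSum_div_sinh_rpow_mul_exp hμ hz (α + 1) k) n hy
  · have := Ring.multichoose_pos hβ m
    positivity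
  · have : 0 < α + 1 - k := by linarith
    positivity

/-- For `μ > 0`, `0 ≤ α < 1`, `k < 1 + α`, the function
`y ↦ (μ/sinh(μy))^(α+1) e^{μky}` is completely monotone on `(0,∞)`:
`(-1)^n h^(n)(y) ≥ 0` for all `n` and `y > 0`. -/
theorem sinh_density_completely_monotone (α k μ : ℝ) (hα0 : 0 ≤ α) (hα1 : α < 1)
    (hk : k < 1 + α) (hμ : 0 < μ) :
    ∀ n : ℕ, ∀ y : ℝ, 0 < y →
      0 ≤ (-1 : ℝ) ^ n *
        iteratedDeriv n (fun y => (μ / Real.sinh (μ * y)) ^ (α + 1) * Real.exp (μ * k * y)) y :=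
  sinh_density_completely_monotone_general α k μ hα0 hk hμ
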